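/- arXiv:1309.7160 — 3 statements merged into one kernel-verified Lean document; each statement's English description precedes it below -/
import Mathlib

section
/- For every complex number s with Re(s) ≥ 12, one has |G₂(s) − 1| < (1/2)·(2/3)^{Re(s)/2}. -/
open Complex Real MeasureTheory
open scoped Classical

/-- The order (multiplicity) of a zero of `f` at `z` (junk value `0` if `f` is not
analytic at `z` or vanishes identically near `z`). -/
noncomputable def zeroMult (f : ℂ → ℂ) (z : ℂ) : ℕ :=
  if h : AnalyticAt ℂ f z then (analyticOrderAt f z).toNat else 0

/-- The second derivative of the Riemann zeta function. -/
noncomputable def zeta'' : ℂ → ℂ := iteratedDeriv 2 riemannZeta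

/-- `G₂(s) = 2^s / (log 2)^2 * ζ''(s)`. -/
noncomputable def G₂ (s : ℂ) : ℂ := (2 : ℂ) ^ s / (Real.log 2 : ℂ) ^ 2 * zeta'' s

/-- `F(s) = 2^s · π^(s-1) · sin (π s / 2) · Γ(1 - s)`, the factor in the functional
equation `ζ(s) = F(s) ζ(1-s)`. -/
noncomputable def F (s : ℂ) : ℂ :=
  (2 : ℂ) ^ s * (π : ℂ) ^ (s - 1) * Complex.sin (π * s / 2) * Complex.Gamma (1 - s)

/-- `Li(x) = ∫_2^x dt / log t`. -/
noncomputable def Li (x : ℝ) : ℝ := ∫ t in (2 : ℝ)..x, 1 / Real.log t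

/-- Sum of `g ρ` over the zeros `ρ` of `ζ''` with `T₁ < Im ρ ≤ T₂`,
counted with multiplicity. -/
noncomputable def zeroSum (T₁ T₂ : ℝ) (g : ℂ → ℝ) : ℝ :=
  ∑ᶠ ρ ∈ {ρ : ℂ | zeta'' ρ = 0 ∧ T₁ < ρ.im ∧ ρ.im ≤ T₂}, (zeroMult zeta'' ρ : ℝ) * g ρ

/-- `N₂(T)`: the number of zeros of `ζ''` with `0 < Im ρ ≤ T`, counted with
multiplicity. -/
noncomputable def N₂ (T : ℝ) : ℕ :=
  ∑ᶠ ρ ∈ {ρ : ℂ | zeta'' ρ = 0 ∧ 0 < ρ.im ∧ ρ.im ≤ T}, zeroMult zeta'' ρ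

/-- The branch of `arg f` along the horizontal line `Im s = T`, obtained by continuous
variation from the limit `0` as `Re s → ∞`: it is given by
`arg f (σ + iT) = - Im ∫_σ^∞ (f'/f)(u + iT) du`. -/
noncomputable def argAlong (f : ℂ → ℂ) (T σ : ℝ) : ℝ :=
  - ∫ u in Set.Ioi σ, (deriv f (u + T * Complex.I) / f (u + T * Complex.I)).im

/-!
For `Re s > 1`, `G₂(s) = ∑_{n ≥ 1} (log₂ n)² (2/n)^s`, whose `n = 1` term vanishes and whose
`n = 2` term is `1`. For `n ≥ 3` and `σ = Re s ≥ 12`,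
`(2/n)^σ = (2/3)^{σ/2} (6/n²)^{σ/2} ≤ (2/3)^{σ/2} (6/n²)^6`, and `log₂ n ≤ n - 1` since
`n ≤ 2^{n-1}`.
Hence `‖G₂(s) - 1‖ ≤ (2/3)^{σ/2} ∑_{n ≥ 3} (n - 1)² (6/n²)^6`, and this series is about `0.38`:
the terms `n = 3, 4, 5` add up to less than `2/5`, and the remaining ones are bounded by
`6⁻² / (n - 5)²`, whose sum is `π² / 216 < 2/27`.
-/

noncomputable def G₂Term (s : ℂ) (n : ℕ) : ℂ :=
  (2 : ℂ) ^ s / (Real.log 2 : ℂ) ^ 2 * LSeries.term (LSeries.logMul^[2] 1) s n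

lemma zeta''_eq_LSeries {s : ℂ} (hs : 1 < s.re) :
    zeta'' s = LSeries (LSeries.logMul^[2] 1) s := by
  have habs : LSeries.abscissaOfAbsConv 1 < s.re := by
    rw [LSeries.abscissaOfAbsConv_one]
    exact_mod_cast hs
  have hζ : riemannZeta =ᶠ[nhds s] LSeries 1 := by
    filter_upwards [(isOpen_lt continuous_const continuous_re).mem_nhds hs] with z hz
    exact (LSeries_one_eq_riemannZeta hz).symm
  rw [zeta'', hζ.iteratedDeriv_eq, LSeries_iteratedDeriv 2 habs]
  norm_num

lemma hasSum_G₂Term {s : ℂ} (hs : 1 < s.re) : HasSum (G₂Term s) (G₂ s) := by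
  have habs : LSeries.abscissaOfAbsConv (LSeries.logMul^[2] 1) < s.re := by
    rw [LSeries.absicssaOfAbsConv_logPowMul, LSeries.abscissaOfAbsConv_one]
    exact_mod_cast hs
  rw [G₂, zeta''_eq_LSeries hs]
  exact (LSeriesSummable_of_abscissaOfAbsConv_lt_re habs).LSeriesHasSum.mul_left _

lemma G₂Term_of_ne_zero (s : ℂ) {n : ℕ} (hn : n ≠ 0) :
    G₂Term s n = (2 : ℂ) ^ s / (Real.log 2 : ℂ) ^ 2 * ((Real.log n : ℂ) ^ 2 / (n : ℂ) ^ s) := by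
  simp [G₂Term, LSeries.term_of_ne_zero hn, LSeries.logMul, ← Complex.natCast_log, sq]

lemma sum_range_three_G₂Term (s : ℂ) : ∑ n ∈ Finset.range 3, G₂Term s n = 1 := by
  have hlog2 : (Real.log 2 : ℂ) ≠ 0 := by exact_mod_cast (Real.log_pos one_lt_two).ne'
  have h2s : (2 : ℂ) ^ s ≠ 0 := by simp
  rw [Finset.sum_range_succ, Finset.sum_range_succ, Finset.sum_range_one,
    G₂Term_of_ne_zero s one_ne_zero, G₂Term_of_ne_zero s two_ne_zero]
  simp only [G₂Term, LSeries.term_zero, Nat.cast_one, Real.log_one, Complex.ofReal_zero,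
    Nat.cast_ofNat, zero_pow two_ne_zero, zero_div, mul_zero, zero_add]
  field_simp

lemma hasSum_G₂Term_add_three {s : ℂ} (hs : 1 < s.re) :
    HasSum (fun k ↦ G₂Term s (k + 3)) (G₂ s - 1) := by
  rw [← sum_range_three_G₂Term s]
  exact (hasSum_nat_add_iff' 3).mpr (hasSum_G₂Term hs)

lemma norm_G₂Term (s : ℂ) {n : ℕ} (hn : n ≠ 0) :
    ‖G₂Term s n‖ = Real.logb 2 n ^ 2 * (2 / n) ^ s.re := by
  have hn' : (0 : ℝ) < n := by positivity
  rw [G₂Term_of_ne_zero s hn, norm_mul, norm_div, norm_div, norm_pow, norm_pow,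
    Complex.norm_natCast_cpow_of_pos (Nat.pos_of_ne_zero hn),
    show (2 : ℂ) = ((2 : ℝ) : ℂ) by norm_num,
    Complex.norm_cpow_eq_rpow_re_of_pos two_pos, Complex.norm_real, Complex.norm_real,
    Real.div_rpow zero_le_two hn'.le, Real.logb]
  simp only [Real.norm_eq_abs, sq_abs]
  ring

lemma logb_two_natCast_le {n : ℕ} (hn : n ≠ 0) : Real.logb 2 n ≤ n - 1 := by
  have h : n ≤ 2 ^ (n - 1) := by
    have := (n - 1).lt_two_pow_self
    omega
  calc Real.logb 2 n ≤ Real.logb 2 (2 ^ (n - 1) : ℕ) :=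
        Real.logb_le_logb_of_le one_lt_two (by positivity) (by exact_mod_cast h)
    _ = n - 1 := by
        rw [Nat.cast_pow, Nat.cast_ofNat, Real.logb_pow, Real.logb_self_eq_one one_lt_two,
          Nat.cast_sub (Nat.one_le_iff_ne_zero.mpr hn)]
        ring

lemma two_div_rpow_le {x σ : ℝ} (hx : 3 ≤ x) (hσ : 12 ≤ σ) :
    (2 / x) ^ σ ≤ (2 / 3) ^ (σ / 2) * (6 / x ^ 2) ^ 6 := by
  have hx0 : 0 < x := by linarith
  have h6 : 6 / x ^ 2 ≤ 1 := by rw [div_le_one (by positivity)]; nlinarith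
  calc (2 / x) ^ σ = ((2 / 3) * (6 / x ^ 2)) ^ (σ / 2) := by
        rw [show (2 / 3) * (6 / x ^ 2) = (2 / x) ^ (2 : ℝ) by
              rw [Real.rpow_two]; field_simp; norm_num,
          ← Real.rpow_mul (by positivity)]
        ring_nf
    _ = (2 / 3) ^ (σ / 2) * (6 / x ^ 2) ^ (σ / 2) := Real.mul_rpow (by norm_num) (by positivity)
    _ ≤ (2 / 3) ^ (σ / 2) * (6 / x ^ 2) ^ ((6 : ℕ) : ℝ) := by
        refine mul_le_mul_of_nonneg_left ?_ (by positivity)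
        exact Real.rpow_le_rpow_of_exponent_ge (by positivity) h6 (by push_cast; linarith)
    _ = (2 / 3) ^ (σ / 2) * (6 / x ^ 2) ^ 6 := by rw [Real.rpow_natCast]

noncomputable def G₂Majorant (n : ℕ) : ℝ := ((n : ℝ) - 1) ^ 2 * (6 / (n : ℝ) ^ 2) ^ 6

lemma G₂Majorant_nonneg (n : ℕ) : 0 ≤ G₂Majorant n := by unfold G₂Majorant; positivity

lemma G₂Majorant_le (n : ℕ) : G₂Majorant n ≤ 6 ^ 6 / (n : ℝ) ^ 10 := by
  rcases Nat.eq_zero_or_pos n with rfl | hn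
  · simp [G₂Majorant]
  have hn' : (1 : ℝ) ≤ n := by exact_mod_cast hn
  calc G₂Majorant n ≤ (n : ℝ) ^ 2 * (6 / (n : ℝ) ^ 2) ^ 6 := by
        unfold G₂Majorant; gcongr; nlinarith
    _ = 6 ^ 6 / (n : ℝ) ^ 10 := by field_simp

lemma summable_G₂Majorant : Summable G₂Majorant :=
  .of_nonneg_of_le G₂Majorant_nonneg G₂Majorant_le <| by
    simpa [div_eq_mul_inv] using
      (summable_one_div_nat_pow.mpr (by norm_num : 1 < 10)).mul_left (6 ^ 6 : ℝ)

lemma norm_G₂Term_le {s : ℂ} (hs : 12 ≤ s.re) {n : ℕ} (hn : 3 ≤ n) :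
    ‖G₂Term s n‖ ≤ (2 / 3) ^ (s.re / 2) * G₂Majorant n := by
  have hlog : 0 ≤ Real.logb 2 n :=
    Real.logb_nonneg one_lt_two (by exact_mod_cast (by omega : 1 ≤ n))
  rw [norm_G₂Term s (by omega), G₂Majorant]
  calc Real.logb 2 n ^ 2 * (2 / n) ^ s.re
      ≤ ((n : ℝ) - 1) ^ 2 * ((2 / 3) ^ (s.re / 2) * (6 / (n : ℝ) ^ 2) ^ 6) := by
        gcongr
        · exact logb_two_natCast_le (by omega)
        · exact two_div_rpow_le (by exact_mod_cast hn) hs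
    _ = (2 / 3) ^ (s.re / 2) * (((n : ℝ) - 1) ^ 2 * (6 / (n : ℝ) ^ 2) ^ 6) := by ring

lemma tsum_G₂Majorant_add_six_le : ∑' k, G₂Majorant (k + 6) ≤ 2 / 27 := by
  have hζ : HasSum (fun k : ℕ ↦ 1 / 36 * (1 / ((k : ℝ) + 1) ^ 2)) (1 / 36 * (π ^ 2 / 6)) := by
    refine HasSum.mul_left _ ?_
    simpa using (hasSum_nat_add_iff' 1).mpr hasSum_zeta_two
  have hterm (k : ℕ) : G₂Majorant (k + 6) ≤ 1 / 36 * (1 / ((k : ℝ) + 1) ^ 2) := by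
    refine (G₂Majorant_le _).trans ?_
    push_cast
    have hk : (0 : ℝ) ≤ k := k.cast_nonneg
    calc 6 ^ 6 / ((k : ℝ) + 6) ^ 10 ≤ 6 ^ 6 / (6 ^ 8 * ((k : ℝ) + 1) ^ 2) := by
          gcongr
          calc 6 ^ 8 * ((k : ℝ) + 1) ^ 2 ≤ ((k : ℝ) + 6) ^ 8 * ((k : ℝ) + 6) ^ 2 := by
                gcongr <;> linarith
            _ = ((k : ℝ) + 6) ^ 10 := by ring
      _ = 1 / 36 * (1 / ((k : ℝ) + 1) ^ 2) := by field_simp; norm_num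
  calc ∑' k, G₂Majorant (k + 6) ≤ 1 / 36 * (π ^ 2 / 6) :=
        hasSum_le hterm ((summable_nat_add_iff 6).mpr summable_G₂Majorant).hasSum hζ
    _ ≤ 2 / 27 := by nlinarith [Real.pi_le_four, Real.pi_pos]

lemma tsum_G₂Majorant_add_three_lt : ∑' k, G₂Majorant (k + 3) < 1 / 2 := by
  rw [← ((summable_nat_add_iff 3).mpr summable_G₂Majorant).sum_add_tsum_nat_add 3]
  simp only [add_assoc, Nat.reduceAdd]
  have hhead : ∑ i ∈ Finset.range 3, G₂Majorant (i + 3) < 2 / 5 := by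
    norm_num [Finset.sum_range_succ, G₂Majorant]
  linarith [tsum_G₂Majorant_add_six_le]

/-- For every `s` with `Re s ≥ 12`,
`|G₂(s) - 1| < (1/2) (2/3)^{Re(s)/2}`. -/
theorem statement3 :
    ∀ s : ℂ, 12 ≤ s.re → ‖G₂ s - 1‖ < 1 / 2 * ((2 / 3 : ℝ) ^ (s.re / 2)) := by
  intro s hs
  have hmaj : HasSum (fun k ↦ (2 / 3 : ℝ) ^ (s.re / 2) * G₂Majorant (k + 3))
      ((2 / 3 : ℝ) ^ (s.re / 2) * ∑' k, G₂Majorant (k + 3)) :=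
    ((summable_nat_add_iff 3).mpr summable_G₂Majorant).hasSum.mul_left _
  calc ‖G₂ s - 1‖ ≤ (2 / 3 : ℝ) ^ (s.re / 2) * ∑' k, G₂Majorant (k + 3) :=
        (hasSum_G₂Term_add_three (by linarith)).norm_le_of_bounded hmaj
          fun k ↦ norm_G₂Term_le hs (by omega)
    _ < (2 / 3 : ℝ) ^ (s.re / 2) * (1 / 2) := by
        gcongr
        exact tsum_G₂Majorant_add_three_lt
    _ = 1 / 2 * ((2 / 3 : ℝ) ^ (s.re / 2)) := mul_comm _ _
end

section
/- For every complex number s = σ + it with σ ≤ −1, one has |(ζ''/ζ)(1 − s)| ≤ 2^σ·((19/8)·(log 2)² + (13/4)·log 2 + 5/2). -/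
open Complex Real MeasureTheory
open scoped Classical

/-! For `Re w = 1 - σ ≥ 2` we have `ζ''/ζ = (ζ'/ζ)² - (ζ'/ζ)' = L(Λ, w)² + L(Λ log, w)`.
Both Dirichlet series have vanishing first term, so each is at most `2 ^ (2 - Re w) = 2 ^ (1 + σ)`
times its value at `2`, which (via `Λ ≤ log`) is at most `∑ log n / n² ≤ 0.954`, resp.
`∑ log² n / n² ≤ 2.024`. These sums are bounded by their first eight terms plus the integral
of the (antitone) summand over `[8, ∞)`, whose antiderivatives are explicit. With `t = 2 ^ σ ≤ 1/2`
this gives `‖ζ''/ζ‖ ≤ (1.908 t)² + 4.048 t ≤ 5.87 t`, and the stated constant is `≈ 5.894`. -/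

open Set Finset

lemma sum_range_le_sum_range_add_of_hasDerivAt {f F : ℝ → ℝ} {N : ℕ}
    (hf : AntitoneOn f (Ici N)) (hf0 : ∀ n : ℕ, 0 ≤ f n)
    (hF : ∀ x ∈ Ici (N : ℝ), HasDerivAt F (-f x) x) (hF0 : ∀ x ∈ Ici (N : ℝ), 0 ≤ F x) (m : ℕ) :
    ∑ n ∈ range m, f n ≤ ∑ n ∈ range (N + 1), f n + F N := by
  have hintegral : ∫ x in (N : ℝ)..N + m, f x = F N - F (N + m) := by
    have hIcc : uIcc (N : ℝ) (N + m) ⊆ Ici (N : ℝ) := by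
      rw [Set.uIcc_of_le (by linarith [m.cast_nonneg (α := ℝ)])]; exact Icc_subset_Ici_self
    rw [← neg_sub, ← intervalIntegral.integral_eq_sub_of_hasDerivAt (fun x hx ↦ hF x (hIcc hx))
      ((hf.mono hIcc).intervalIntegrable.neg), intervalIntegral.integral_neg, neg_neg]
  calc ∑ n ∈ range m, f n ≤ ∑ n ∈ range (N + 1 + m), f n :=
        sum_le_sum_of_subset_of_nonneg (range_mono (by omega)) fun n _ _ ↦ hf0 n
    _ = ∑ n ∈ range (N + 1), f n + ∑ i ∈ range m, f (N + (i + 1 : ℕ)) := by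
        rw [sum_range_add]; push_cast; ring_nf
    _ ≤ ∑ n ∈ range (N + 1), f n + ∫ x in (N : ℝ)..N + m, f x := by
        gcongr
        exact AntitoneOn.sum_le_integral (hf.mono Icc_subset_Ici_self)
    _ ≤ ∑ n ∈ range (N + 1), f n + F N := by
        rw [hintegral]
        linarith [hF0 (N + m) (by simp)]

lemma Real.antitoneOn_log_div_sq : AntitoneOn (fun x ↦ log x / x ^ 2) (Ici (exp 1)) := by
  intro x hx y hy hxy
  have hx0 : 0 < x := (exp_pos 1).trans_le hx
  have hy1 : 1 ≤ y := by linarith [add_one_le_exp 1, hy.out]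
  have hy0 : 0 ≤ log y / y := div_nonneg (log_nonneg hy1) (by linarith)
  calc log y / y ^ 2 = log y / y * y⁻¹ := by ring
    _ ≤ log x / x * x⁻¹ := mul_le_mul (log_div_self_antitoneOn hx hy hxy) (inv_anti₀ hx0 hxy)
        (inv_nonneg.mpr (by linarith)) (hy0.trans (log_div_self_antitoneOn hx hy hxy))
    _ = log x / x ^ 2 := by ring

lemma Real.antitoneOn_log_sq_div_sq : AntitoneOn (fun x ↦ log x ^ 2 / x ^ 2) (Ici (exp 1)) := by
  intro x hx y hy hxy
  have hy1 : 1 ≤ y := by linarith [add_one_le_exp 1, hy.out]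
  have hy0 : 0 ≤ log y / y := div_nonneg (log_nonneg hy1) (by linarith)
  simp only [← div_pow]
  exact pow_le_pow_left₀ hy0 (log_div_self_antitoneOn hx hy hxy) 2

lemma Real.hasDerivAt_log_add_one_div {x : ℝ} (hx : 0 < x) :
    HasDerivAt (fun x ↦ (log x + 1) / x) (-(log x / x ^ 2)) x := by
  refine (((hasDerivAt_log hx.ne').add_const 1).fun_div (hasDerivAt_id' x) hx.ne').congr_deriv ?_
  field_simp
  ring

lemma Real.hasDerivAt_log_sq_add_two_mul_log_add_two_div {x : ℝ} (hx : 0 < x) :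
    HasDerivAt (fun x ↦ (log x ^ 2 + 2 * log x + 2) / x) (-(log x ^ 2 / x ^ 2)) x := by
  have hlog := hasDerivAt_log hx.ne'
  refine ((((hlog.pow 2).add (hlog.const_mul 2)).add_const 2).fun_div (hasDerivAt_id' x)
    hx.ne').congr_deriv ?_
  simp only [Pi.add_apply, Pi.pow_apply]
  field_simp
  ring

lemma Real.log_six_eq : log 6 = log 2 + log 3 := by norm_num [← log_mul]

lemma Real.log_eight_eq : log 8 = 3 * log 2 := by
  rw [show (8 : ℝ) = 2 ^ 3 by norm_num, log_pow]; norm_num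

lemma Real.log_seven_lt : log 7 < 1.955 := by
  have h := log_le_sub_one_of_pos (show (0 : ℝ) < 7 / 8 by norm_num)
  rw [log_div (by norm_num) (by norm_num), log_eight_eq] at h
  linarith [log_two_lt_d9]

lemma Ici_eight_subset_Ici_exp_one : Ici ((8 : ℕ) : ℝ) ⊆ Ici (exp 1) :=
  Ici_subset_Ici.mpr (by norm_num; linarith [exp_one_lt_d9])

lemma sum_range_log_div_sq_le (m : ℕ) : ∑ n ∈ range m, Real.log n / (n : ℝ) ^ 2 ≤ 0.954 := by
  have hx : ∀ x ∈ Ici ((8 : ℕ) : ℝ), 1 < x := fun x hx ↦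
    (one_lt_exp_iff.mpr one_pos).trans_le (Ici_eight_subset_Ici_exp_one hx)
  refine (sum_range_le_sum_range_add_of_hasDerivAt
    (antitoneOn_log_div_sq.mono Ici_eight_subset_Ici_exp_one)
    (fun n ↦ div_nonneg (log_natCast_nonneg n) (by positivity))
    (fun x h ↦ hasDerivAt_log_add_one_div (by linarith [hx x h]))
    (fun x h ↦ div_nonneg (by linarith [log_nonneg (hx x h).le]) (by linarith [hx x h]))
    m).trans ?_
  simp only [sum_range_succ, sum_range_zero]
  norm_num [log_four_eq, log_six_eq, log_eight_eq]
  linarith [log_two_lt_d9, log_three_lt_d9, log_five_lt_d9, log_seven_lt]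

lemma sum_range_log_sq_div_sq_le (m : ℕ) :
    ∑ n ∈ range m, Real.log n ^ 2 / (n : ℝ) ^ 2 ≤ 2.024 := by
  have hx : ∀ x ∈ Ici ((8 : ℕ) : ℝ), 1 < x := fun x hx ↦
    (one_lt_exp_iff.mpr one_pos).trans_le (Ici_eight_subset_Ici_exp_one hx)
  refine (sum_range_le_sum_range_add_of_hasDerivAt
    (antitoneOn_log_sq_div_sq.mono Ici_eight_subset_Ici_exp_one) (fun n ↦ by positivity)
    (fun x h ↦ hasDerivAt_log_sq_add_two_mul_log_add_two_div (by linarith [hx x h]))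
    (fun x h ↦ div_nonneg (by nlinarith [sq_nonneg (Real.log x + 1)]) (by linarith [hx x h]))
    m).trans ?_
  simp only [sum_range_succ, sum_range_zero]
  norm_num [log_four_eq, log_six_eq, log_eight_eq]
  have sq_le {x u : ℝ} (h0 : 0 < x) (h : x < u) : x ^ 2 ≤ u ^ 2 := pow_le_pow_left₀ h0.le h.le 2
  have h2 := log_two_lt_d9
  have h3 := log_three_lt_d9
  have h5 := log_five_lt_d9
  have h7 := log_seven_lt
  have p2 : 0 < Real.log 2 := Real.log_pos (by norm_num)
  have p3 : 0 < Real.log 3 := Real.log_pos (by norm_num)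
  linarith [sq_le p2 h2, sq_le p3 h3, sq_le (Real.log_pos (by norm_num)) h5,
    sq_le (Real.log_pos (by norm_num)) h7, mul_le_mul h2.le h3.le p3.le (by norm_num)]

open ArithmeticFunction LSeries
open scoped LSeries.notation

lemma LSeries.norm_term_le_two_rpow_mul {f : ℕ → ℂ} (hf1 : f 1 = 0) {s w : ℂ} (hsw : s.re ≤ w.re)
    (n : ℕ) : ‖term f w n‖ ≤ 2 ^ (s.re - w.re) * ‖term f s n‖ := by
  rcases lt_trichotomy n 1 with h | rfl | h
  · obtain rfl : n = 0 := by omega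
    simp
  · simp [hf1]
  · have hn : (2 : ℝ) ≤ n := by exact_mod_cast h
    have hpow : (n : ℝ) ^ w.re = n ^ s.re * n ^ (w.re - s.re) := by
      rw [← Real.rpow_add (by linarith)]; ring_nf
    simp only [norm_term_eq, if_neg (by omega : n ≠ 0)]
    rw [hpow, ← div_div, show s.re - w.re = -(w.re - s.re) by ring, Real.rpow_neg zero_le_two,
      ← div_eq_inv_mul]
    exact div_le_div_of_nonneg_left (by positivity) (by positivity)
      (Real.rpow_le_rpow zero_le_two hn (by linarith))

lemma LSeries.norm_LSeries_le_two_rpow_mul_of_sum_range_le {f : ℕ → ℂ} (hf1 : f 1 = 0) {s w : ℂ}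
    (hsw : s.re ≤ w.re) {B : ℝ} (hB : ∀ m, ∑ n ∈ range m, ‖term f s n‖ ≤ B) :
    ‖LSeries f w‖ ≤ 2 ^ (s.re - w.re) * B := by
  have hsum := summable_of_sum_range_le (fun _ ↦ norm_nonneg _) hB
  calc ‖LSeries f w‖ ≤ 2 ^ (s.re - w.re) * ∑' n, ‖term f s n‖ :=
        tsum_of_norm_bounded (hsum.hasSum.mul_left _) (norm_term_le_two_rpow_mul hf1 hsw)
    _ ≤ 2 ^ (s.re - w.re) * B := by
        gcongr
        exact Real.tsum_le_of_sum_range_le (fun _ ↦ norm_nonneg _) hB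

lemma LSeries.abscissaOfAbsConv_vonMangoldt_le_one : abscissaOfAbsConv ↗Λ ≤ 1 :=
  abscissaOfAbsConv_le_of_forall_lt_LSeriesSummable fun _ hy ↦
    LSeriesSummable_vonMangoldt (by simpa using hy)

lemma iteratedDeriv_two_riemannZeta_div {w : ℂ} (hw : 1 < w.re) :
    iteratedDeriv 2 riemannZeta w / riemannZeta w = L ↗Λ w ^ 2 + L (logMul ↗Λ) w := by
  have hζ : riemannZeta w ≠ 0 := riemannZeta_ne_zero_of_one_lt_re hw
  have hderiv : deriv riemannZeta =ᶠ[nhds w] fun z ↦ -(riemannZeta z * L ↗Λ z) := by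
    filter_upwards [(isOpen_lt continuous_const continuous_re).mem_nhds hw] with z hz
    rw [LSeries_vonMangoldt_eq_deriv_riemannZeta_div hz,
      mul_div_cancel₀ _ (riemannZeta_ne_zero_of_one_lt_re hz), neg_neg]
  have hL : HasDerivAt (L ↗Λ) (-L (logMul ↗Λ) w) w :=
    LSeries_hasDerivAt (abscissaOfAbsConv_vonMangoldt_le_one.trans_lt (mod_cast hw))
  have hζ' : HasDerivAt riemannZeta (-(riemannZeta w * L ↗Λ w)) w := by
    have h := (differentiableAt_riemannZeta (s := w) (by rintro rfl; simp at hw)).hasDerivAt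
    rwa [hderiv.self_of_nhds] at h
  have hζ'' : HasDerivAt (fun z ↦ -(riemannZeta z * L ↗Λ z))
      (-(-(riemannZeta w * L ↗Λ w) * L ↗Λ w + riemannZeta w * -L (logMul ↗Λ) w)) w :=
    (hζ'.mul hL).neg
  rw [iteratedDeriv_succ, iteratedDeriv_one, hderiv.deriv_eq, hζ''.deriv]
  field_simp
  ring

lemma LSeries.norm_term_two_le {f : ℕ → ℂ} {r : ℕ → ℝ} (h : ∀ n, ‖f n‖ ≤ r n) (n : ℕ) :
    ‖term f 2 n‖ ≤ r n / n ^ 2 := by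
  rcases eq_or_ne n 0 with rfl | hn
  · simp
  · rw [norm_term_eq, if_neg hn, re_ofNat, Real.rpow_two]
    exact div_le_div_of_nonneg_right (h n) (by positivity)

lemma norm_LSeries_vonMangoldt_le {w : ℂ} (hw : 2 ≤ w.re) :
    ‖L ↗Λ w‖ ≤ 2 ^ (2 - w.re) * 0.954 := by
  have hbound (n : ℕ) : ‖(Λ n : ℂ)‖ ≤ Real.log n := by
    rw [norm_real, Real.norm_of_nonneg vonMangoldt_nonneg]
    exact vonMangoldt_le_log
  simpa using norm_LSeries_le_two_rpow_mul_of_sum_range_le (s := 2) (by simp) (by simpa using hw)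
    fun m ↦ (sum_le_sum fun n _ ↦ norm_term_two_le hbound n).trans (sum_range_log_div_sq_le m)

lemma norm_LSeries_logMul_vonMangoldt_le {w : ℂ} (hw : 2 ≤ w.re) :
    ‖L (logMul ↗Λ) w‖ ≤ 2 ^ (2 - w.re) * 2.024 := by
  have hbound (n : ℕ) : ‖logMul ↗Λ n‖ ≤ Real.log n ^ 2 := by
    rw [logMul, norm_mul, ← natCast_log, norm_real, norm_real, Real.norm_of_nonneg
      vonMangoldt_nonneg, Real.norm_of_nonneg (Real.log_natCast_nonneg n), sq]
    exact mul_le_mul_of_nonneg_left vonMangoldt_le_log (Real.log_natCast_nonneg n)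
  simpa using norm_LSeries_le_two_rpow_mul_of_sum_range_le (s := 2) (by simp) (by simpa using hw)
    fun m ↦ (sum_le_sum fun n _ ↦ norm_term_two_le hbound n).trans (sum_range_log_sq_div_sq_le m)

/-- For every `s = σ + it` with `σ ≤ -1`,
`|(ζ''/ζ)(1 - s)| ≤ 2^σ ((19/8) (log 2)² + (13/4) log 2 + 5/2)`. -/
theorem statement15 :
    ∀ s : ℂ, s.re ≤ -1 →
      ‖zeta'' (1 - s) / riemannZeta (1 - s)‖ ≤
        (2 : ℝ) ^ s.re * (19 / 8 * (Real.log 2) ^ 2 + 13 / 4 * Real.log 2 + 5 / 2) := by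
  intro s hs
  set t := (2 : ℝ) ^ s.re
  have hre : (1 - s).re = 1 - s.re := by rw [sub_re, one_re]
  have hw : 2 ≤ (1 - s).re := by linarith
  have hpow : (2 : ℝ) ^ (2 - (1 - s).re) = 2 * t := by
    rw [hre, show 2 - (1 - s.re) = 1 + s.re by ring, Real.rpow_add two_pos, Real.rpow_one]
  have ht0 : 0 ≤ t := by positivity
  have ht : t ≤ 1 / 2 := by
    simpa [Real.rpow_neg_one] using Real.rpow_le_rpow_of_exponent_le one_le_two hs
  have hΛ := norm_LSeries_vonMangoldt_le hw
  have hlogΛ := norm_LSeries_logMul_vonMangoldt_le hw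
  rw [hpow] at hΛ hlogΛ
  have hC : 5.87 ≤ 19 / 8 * Real.log 2 ^ 2 + 13 / 4 * Real.log 2 + 5 / 2 := by
    nlinarith [log_two_gt_d9]
  rw [zeta'', iteratedDeriv_two_riemannZeta_div (by linarith)]
  calc ‖L ↗Λ (1 - s) ^ 2 + L (logMul ↗Λ) (1 - s)‖
      ≤ ‖L ↗Λ (1 - s)‖ ^ 2 + ‖L (logMul ↗Λ) (1 - s)‖ :=
        (norm_add_le _ _).trans_eq (by rw [norm_pow])
    _ ≤ (2 * t * 0.954) ^ 2 + 2 * t * 2.024 := by gcongr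
    _ ≤ t * 5.87 := by nlinarith [mul_le_mul_of_nonneg_left ht ht0]
    _ ≤ t * _ := by gcongr
end

section
/- There exists σ₂ ≤ −1 such that for all s = σ + it with σ ≤ σ₂ and t ≥ 2, one has |F''(s)/F'(s)| ≥ (1/2)·log(1 − σ). -/
open Complex Real MeasureTheory
open scoped Classical

/-!
Write `L = F'/F`. Logarithmic differentiation of the product gives
`L(s) = log 2 + log π + (π/2) cot(πs/2) - ψ(1 - s)`, and then `F''/F' = L + L'/L`.
For `Im s ≥ 2` the cotangent is bounded, while the Weierstrass product of `Γ` gives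
`Re ψ(w) ≥ log (Re w) - 3` (compare the series with the harmonic sum up to `⌊Re w⌋`), so
`|L(s)| ≥ log (1 - σ) - 8`. On the other hand
`L' = -(π/2)² / sin²(πs/2) + ψ'(1 - s)` is bounded, so `L'/L` is negligible once
`log (1 - σ)` is large.
-/

open Filter Topology Finset
open scoped Nat

local notation "γ" => Real.eulerMascheroniConstant

lemma hasSum_inv_natCast_add_one_sq :
    HasSum (fun n : ℕ => ((n : ℝ) + 1)⁻¹ ^ 2) (π ^ 2 / 6) := by
  have h := (hasSum_nat_add_iff (f := fun n : ℕ => 1 / (n : ℝ) ^ 2) 1).mpr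
    (by simpa using hasSum_zeta_two)
  simpa [one_div, inv_pow] using h

lemma summable_inv_natCast_add_one_sq : Summable (fun n : ℕ => ((n : ℝ) + 1)⁻¹ ^ 2) :=
  hasSum_inv_natCast_add_one_sq.summable

namespace Complex

lemma norm_natCast_add_one (n : ℕ) : ‖(n + 1 : ℂ)‖ = n + 1 := by
  exact_mod_cast Complex.norm_natCast (n + 1)

lemma natCast_add_one_le_norm_add {n : ℕ} {w : ℂ} (hw : 0 ≤ w.re) :
    (n + 1 : ℝ) ≤ ‖(n + 1 : ℂ) + w‖ :=
  calc (n + 1 : ℝ) ≤ ((n + 1 : ℂ) + w).re := by simp [hw]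
    _ ≤ ‖(n + 1 : ℂ) + w‖ := re_le_norm _

lemma natCast_add_one_add_ne_zero {n : ℕ} {w : ℂ} (hw : 0 ≤ w.re) : (n + 1 : ℂ) + w ≠ 0 := by
  rw [← norm_pos_iff]
  exact lt_of_lt_of_le (by positivity) (natCast_add_one_le_norm_add hw)

lemma re_inv_le_inv_re {z : ℂ} (hz : 0 < z.re) : (z⁻¹).re ≤ (z.re)⁻¹ := by
  rw [inv_re, div_le_iff₀' (normSq_pos.mpr (fun h => by simp [h] at hz)), normSq_apply,
    ← div_le_iff₀ (inv_pos.mpr hz), div_inv_eq_mul]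
  nlinarith [mul_self_nonneg z.im]

/-- The term `w/(n+1) - log (1 + w/(n+1))` of the Weierstrass series
`log Γ(w) = -log w - γ w + ∑_{k ≥ 1} (w/k - log (1 + w/k))`, indexed from `0`. -/
noncomputable def logGammaTerm (n : ℕ) (w : ℂ) : ℂ := w / (n + 1) - log (1 + w / (n + 1))

noncomputable def digammaTerm (n : ℕ) (w : ℂ) : ℂ := (n + 1 : ℂ)⁻¹ - ((n + 1 : ℂ) + w)⁻¹

noncomputable def trigammaTerm (n : ℕ) (w : ℂ) : ℂ := (((n + 1 : ℂ) + w)⁻¹) ^ 2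

noncomputable def logGammaSeries (w : ℂ) : ℂ := -log w - γ * w + ∑' n, logGammaTerm n w

noncomputable def digammaSeries (w : ℂ) : ℂ := -w⁻¹ - γ + ∑' n, digammaTerm n w

noncomputable def trigammaSeries (w : ℂ) : ℂ := (w⁻¹) ^ 2 + ∑' n, trigammaTerm n w

lemma norm_logGammaTerm_le {n : ℕ} {w : ℂ} (hn : 2 * ‖w‖ ≤ n + 1) :
    ‖logGammaTerm n w‖ ≤ ‖w‖ ^ 2 * ((n : ℝ) + 1)⁻¹ ^ 2 := by
  set z := w / (n + 1 : ℂ) with hz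
  have hz_norm : ‖z‖ = ‖w‖ * ((n : ℝ) + 1)⁻¹ := by
    rw [hz, norm_div, norm_natCast_add_one, div_eq_mul_inv]
  have hz_half : ‖z‖ ≤ 1 / 2 := by
    rw [hz_norm, ← div_eq_mul_inv, div_le_iff₀ (by positivity)]
    linarith
  calc ‖logGammaTerm n w‖ = ‖log (1 + z) - z‖ := by
        rw [← norm_neg, logGammaTerm, ← hz, neg_sub]
    _ ≤ ‖z‖ ^ 2 * (1 - ‖z‖)⁻¹ / 2 := norm_log_one_add_sub_self_le (by linarith)
    _ ≤ ‖z‖ ^ 2 * 2 / 2 := by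
        gcongr
        rw [inv_le_comm₀ (by linarith) two_pos]
        linarith
    _ = ‖w‖ ^ 2 * ((n : ℝ) + 1)⁻¹ ^ 2 := by rw [hz_norm]; ring

lemma norm_digammaTerm_le {n : ℕ} {w : ℂ} (hw : 0 ≤ w.re) :
    ‖digammaTerm n w‖ ≤ ‖w‖ * ((n : ℝ) + 1)⁻¹ ^ 2 := by
  have h₁ := Nat.cast_add_one_ne_zero (R := ℂ) n
  have h₂ := natCast_add_one_add_ne_zero (n := n) hw
  have heq : digammaTerm n w = w * ((n + 1 : ℂ)⁻¹ * ((n + 1 : ℂ) + w)⁻¹) := by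
    rw [digammaTerm]; field_simp; ring
  rw [heq, norm_mul, norm_mul, norm_inv, norm_inv, norm_natCast_add_one, sq]
  gcongr
  exact natCast_add_one_le_norm_add hw

lemma norm_trigammaTerm_le {n : ℕ} {w : ℂ} (hw : 0 ≤ w.re) :
    ‖trigammaTerm n w‖ ≤ ((n : ℝ) + 1)⁻¹ ^ 2 := by
  rw [trigammaTerm, norm_pow, norm_inv]
  gcongr
  exact natCast_add_one_le_norm_add hw

lemma summable_logGammaTerm (w : ℂ) : Summable (logGammaTerm · w) := by
  refine .of_norm_bounded_eventually (summable_inv_natCast_add_one_sq.mul_left (‖w‖ ^ 2)) ?_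
  rw [Nat.cofinite_eq_atTop, eventually_atTop]
  refine ⟨⌈2 * ‖w‖⌉₊, fun n hn => norm_logGammaTerm_le ?_⟩
  calc 2 * ‖w‖ ≤ ⌈2 * ‖w‖⌉₊ := Nat.le_ceil _
    _ ≤ n + 1 := by norm_cast; omega

lemma summable_digammaTerm {w : ℂ} (hw : 0 ≤ w.re) : Summable (digammaTerm · w) :=
  .of_norm_bounded (summable_inv_natCast_add_one_sq.mul_left ‖w‖) fun _ => norm_digammaTerm_le hw

lemma hasDerivAt_logGammaTerm (n : ℕ) {w : ℂ} (hw : 0 ≤ w.re) :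
    HasDerivAt (logGammaTerm n) (digammaTerm n w) w := by
  have h₁ := Nat.cast_add_one_ne_zero (R := ℂ) n
  have h₂ := natCast_add_one_add_ne_zero (n := n) hw
  have hslit : 1 + w / (n + 1 : ℂ) ∈ slitPlane := by
    refine mem_slitPlane_iff.mpr (Or.inl ?_)
    rw [show (n + 1 : ℂ) = ((n + 1 : ℝ) : ℂ) by push_cast; ring, add_re, one_re, div_ofReal_re]
    positivity
  have hdiv : HasDerivAt (fun z : ℂ => z / (n + 1)) (n + 1 : ℂ)⁻¹ w := by
    simpa [one_div] using (hasDerivAt_id w).div_const (n + 1 : ℂ)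
  refine (hdiv.sub ((hdiv.const_add 1).clog hslit)).congr_deriv ?_
  have h₃ := slitPlane_ne_zero hslit
  rw [digammaTerm]
  field_simp

lemma hasDerivAt_digammaTerm (n : ℕ) {w : ℂ} (hw : 0 ≤ w.re) :
    HasDerivAt (digammaTerm n) (trigammaTerm n w) w := by
  have h := (((hasDerivAt_id w).const_add (n + 1 : ℂ)).inv
    (natCast_add_one_add_ne_zero hw)).const_sub (n + 1 : ℂ)⁻¹
  refine h.congr_deriv ?_
  rw [trigammaTerm]
  simp only [id, neg_div, neg_neg, one_div, inv_pow]

lemma re_pos_of_mem_ball {w z : ℂ} (hz : z ∈ Metric.ball w w.re) : 0 < z.re := by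
  rw [mem_ball_iff_norm] at hz
  have := (abs_re_le_norm (z - w)).trans_lt hz
  rw [sub_re, abs_lt] at this
  linarith [this.1]

lemma hasDerivAt_tsum_logGammaTerm {w : ℂ} (hw : 0 < w.re) :
    HasDerivAt (fun z => ∑' n, logGammaTerm n z) (∑' n, digammaTerm n w) w := by
  have hw_mem : w ∈ Metric.ball w w.re := Metric.mem_ball_self hw
  refine hasDerivAt_tsum_of_isPreconnected
    (summable_inv_natCast_add_one_sq.mul_left (‖w‖ + w.re)) Metric.isOpen_ball
    (convex_ball w _).isPreconnected
    (fun n y hy => hasDerivAt_logGammaTerm n (re_pos_of_mem_ball hy).le) (fun n y hy => ?_)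
    hw_mem (summable_logGammaTerm w) hw_mem
  have hy_norm : ‖y‖ ≤ ‖w‖ + w.re :=
    (norm_le_norm_add_norm_sub' y w).trans (by gcongr; exact (mem_ball_iff_norm.mp hy).le)
  calc ‖digammaTerm n y‖ ≤ ‖y‖ * ((n : ℝ) + 1)⁻¹ ^ 2 :=
        norm_digammaTerm_le (re_pos_of_mem_ball hy).le
    _ ≤ (‖w‖ + w.re) * ((n : ℝ) + 1)⁻¹ ^ 2 := by gcongr

lemma hasDerivAt_tsum_digammaTerm {w : ℂ} (hw : 0 < w.re) :
    HasDerivAt (fun z => ∑' n, digammaTerm n z) (∑' n, trigammaTerm n w) w :=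
  hasDerivAt_tsum_of_isPreconnected summable_inv_natCast_add_one_sq
    (isOpen_lt continuous_const continuous_re) (convex_halfSpace_re_gt 0).isPreconnected
    (fun n _ hy => hasDerivAt_digammaTerm n (le_of_lt hy))
    (fun _ _ hy => norm_trigammaTerm_le (le_of_lt hy)) hw (summable_digammaTerm hw.le) hw

lemma hasDerivAt_logGammaSeries {w : ℂ} (hw : 0 < w.re) :
    HasDerivAt logGammaSeries (digammaSeries w) w := by
  have hγ : HasDerivAt (fun z : ℂ => γ * z) γ w := by
    simpa using (hasDerivAt_id w).const_mul (γ : ℂ)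
  exact (((hasDerivAt_log (Or.inl hw)).neg).sub hγ).add (hasDerivAt_tsum_logGammaTerm hw)

lemma hasDerivAt_digammaSeries {w : ℂ} (hw : 0 < w.re) :
    HasDerivAt digammaSeries (trigammaSeries w) w := by
  have hw₀ : w ≠ 0 := fun h => by simp [h] at hw
  refine ((((hasDerivAt_id w).inv hw₀).neg.sub_const (γ : ℂ)).add
    (hasDerivAt_tsum_digammaTerm hw)).congr_deriv ?_
  simp only [trigammaSeries, id, neg_div, neg_neg, one_div, inv_pow]

lemma exp_sum_logGammaTerm {w : ℂ} (hw : 0 ≤ w.re) (N : ℕ) :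
    exp (∑ n ∈ range N, logGammaTerm n w) =
      exp (harmonic N * w) * N ! / ∏ n ∈ range N, ((n + 1 : ℂ) + w) := by
  have hterm (n : ℕ) : exp (logGammaTerm n w) =
      exp (w / (n + 1)) * ((n + 1 : ℂ) / ((n + 1 : ℂ) + w)) := by
    have h₁ := Nat.cast_add_one_ne_zero (R := ℂ) n
    have h₂ := natCast_add_one_add_ne_zero (n := n) hw
    have h₃ : 1 + w / (n + 1 : ℂ) = ((n + 1 : ℂ) + w) / (n + 1) := by field_simp
    rw [logGammaTerm, exp_sub, h₃, exp_log (div_ne_zero h₂ h₁), div_div_eq_mul_div, mul_div_assoc]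
  rw [exp_sum, prod_congr rfl fun n _ => hterm n, prod_mul_distrib, ← exp_sum, prod_div_distrib,
    mul_div_assoc]
  congr 3
  · push_cast [harmonic, sum_mul, div_eq_inv_mul]
    rfl
  · exact_mod_cast prod_range_add_one_eq_factorial N

lemma GammaSeq_eq_exp_mul_factorial_div {w : ℂ} {N : ℕ} (hN : N ≠ 0) :
    GammaSeq w N = exp (Real.log N * w) * N ! / (w * ∏ n ∈ range N, ((n + 1 : ℂ) + w)) := by
  rw [GammaSeq, cpow_def_of_ne_zero (Nat.cast_ne_zero.mpr hN), prod_range_succ',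
    ← ofReal_natCast, ← ofReal_log (Nat.cast_nonneg N)]
  simp only [Nat.cast_zero, add_zero, Nat.cast_add, Nat.cast_one]
  rw [mul_comm w]
  congr 2
  exact prod_congr rfl fun n _ => by ring

lemma exp_partial_logGammaSeries {w : ℂ} (hw : 0 < w.re) {N : ℕ} (hN : N ≠ 0) :
    exp (-log w - γ * w + ∑ n ∈ range N, logGammaTerm n w) =
      GammaSeq w N * exp ((harmonic N - Real.log N - γ : ℝ) * w) := by
  have hw₀ : w ≠ 0 := fun h => by simp [h] at hw
  have hP : ∏ n ∈ range N, ((n + 1 : ℂ) + w) ≠ 0 :=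
    prod_ne_zero_iff.mpr fun n _ => natCast_add_one_add_ne_zero hw.le
  rw [exp_add, exp_sub, exp_neg, exp_log hw₀, exp_sum_logGammaTerm hw.le,
    GammaSeq_eq_exp_mul_factorial_div hN,
    show ((harmonic N - Real.log N - γ : ℝ) : ℂ) * w = harmonic N * w - Real.log N * w - γ * w by
      push_cast; ring, exp_sub, exp_sub]
  field_simp [exp_ne_zero]

lemma exp_logGammaSeries {w : ℂ} (hw : 0 < w.re) : exp (logGammaSeries w) = Gamma w := by
  have h_lhs : Tendsto (fun N => exp (-log w - γ * w + ∑ n ∈ range N, logGammaTerm n w))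
      atTop (𝓝 (exp (logGammaSeries w))) :=
    (continuous_exp.tendsto _).comp
      (tendsto_const_nhds.add (summable_logGammaTerm w).hasSum.tendsto_sum_nat)
  have h_corr : Tendsto (fun N : ℕ => exp ((harmonic N - Real.log N - γ : ℝ) * w))
      atTop (𝓝 1) := by
    have h := (Real.tendsto_harmonic_sub_log.sub_const γ).ofReal.mul_const w |>.cexp
    simpa using h
  have h_rhs := (GammaSeq_tendsto_Gamma w).mul h_corr
  rw [mul_one] at h_rhs
  refine tendsto_nhds_unique (h_lhs.congr' ?_) h_rhs
  filter_upwards [eventually_ne_atTop 0] with N hN using exp_partial_logGammaSeries hw hN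

lemma hasDerivAt_Gamma_of_re_pos {w : ℂ} (hw : 0 < w.re) :
    HasDerivAt Gamma (digammaSeries w * Gamma w) w := by
  have h := (hasDerivAt_logGammaSeries hw).cexp.congr_of_eventuallyEq
    (((isOpen_lt continuous_const continuous_re).eventually_mem hw).mono
      fun z hz => (exp_logGammaSeries hz).symm)
  rwa [exp_logGammaSeries hw, mul_comm] at h

lemma digamma_eq_digammaSeries {w : ℂ} (hw : 0 < w.re) : digamma w = digammaSeries w := by
  rw [digamma_def, logDeriv_apply, (hasDerivAt_Gamma_of_re_pos hw).deriv,
    mul_div_cancel_right₀ _ (Gamma_ne_zero_of_re_pos hw)]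

lemma hasDerivAt_digamma {w : ℂ} (hw : 0 < w.re) : HasDerivAt digamma (trigammaSeries w) w :=
  (hasDerivAt_digammaSeries hw).congr_of_eventuallyEq
    (((isOpen_lt continuous_const continuous_re).eventually_mem hw).mono
      fun _ hz => digamma_eq_digammaSeries hz)

lemma inv_sub_inv_le_re_digammaTerm (n : ℕ) {w : ℂ} (hw : 0 < w.re) :
    ((n : ℝ) + 1)⁻¹ - ((n : ℝ) + 1 + w.re)⁻¹ ≤ (digammaTerm n w).re := by
  have hre : ((n + 1 : ℂ) + w).re = n + 1 + w.re := by simp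
  have h := re_inv_le_inv_re (z := (n + 1 : ℂ) + w) (by rw [hre]; positivity)
  have hinv : ((n + 1 : ℂ)⁻¹).re = ((n : ℝ) + 1)⁻¹ := by
    rw [show (n + 1 : ℂ)⁻¹ = (((n : ℝ) + 1)⁻¹ : ℝ) by push_cast; rfl, ofReal_re]
  rw [digammaTerm, sub_re, hinv]
  rw [hre] at h
  linarith

lemma re_digammaTerm_nonneg (n : ℕ) {w : ℂ} (hw : 0 < w.re) : 0 ≤ (digammaTerm n w).re :=
  (sub_nonneg.mpr (inv_anti₀ (by positivity) (by linarith))).trans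
    (inv_sub_inv_le_re_digammaTerm n hw)

lemma harmonic_floor_sub_one_le_sum_re_digammaTerm {w : ℂ} (hw : 0 < w.re) :
    (harmonic ⌊w.re⌋₊ : ℝ) - 1 ≤ ∑ n ∈ range ⌊w.re⌋₊, (digammaTerm n w).re := by
  set x := w.re
  set N := ⌊x⌋₊
  have h_tail : ∑ n ∈ range N, ((n : ℝ) + 1 + x)⁻¹ ≤ 1 :=
    calc ∑ n ∈ range N, ((n : ℝ) + 1 + x)⁻¹ ≤ ∑ n ∈ range N, x⁻¹ :=
          sum_le_sum fun n _ => inv_anti₀ hw (by linarith [n.cast_nonneg (α := ℝ)])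
      _ = N * x⁻¹ := by rw [sum_const, card_range, nsmul_eq_mul]
      _ ≤ x * x⁻¹ := by gcongr; exact Nat.floor_le hw.le
      _ = 1 := mul_inv_cancel₀ hw.ne'
  have h_harmonic : (harmonic N : ℝ) = ∑ n ∈ range N, ((n : ℝ) + 1)⁻¹ := by
    push_cast [harmonic]
    rfl
  calc (harmonic N : ℝ) - 1
      ≤ ∑ n ∈ range N, (((n : ℝ) + 1)⁻¹ - ((n : ℝ) + 1 + x)⁻¹) := by
        rw [sum_sub_distrib, h_harmonic]
        linarith
    _ ≤ ∑ n ∈ range N, (digammaTerm n w).re :=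
        sum_le_sum fun n _ => inv_sub_inv_le_re_digammaTerm n hw

lemma log_re_sub_three_le_re_digamma {w : ℂ} (hw : 1 ≤ w.re) :
    Real.log w.re - 3 ≤ (digamma w).re := by
  have hw₀ : 0 < w.re := by linarith
  have hsum := summable_digammaTerm hw₀.le
  have hsum_re := reCLM.summable hsum
  have h_partial : ∑ n ∈ range ⌊w.re⌋₊, (digammaTerm n w).re ≤ ∑' n, (digammaTerm n w).re :=
    hsum_re.sum_le_tsum _ (fun n _ => re_digammaTerm_nonneg n hw₀)
  have h_inv : (w⁻¹).re ≤ 1 :=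
    (re_inv_le_inv_re hw₀).trans (inv_le_one_of_one_le₀ hw)
  have hγ := Real.eulerMascheroniConstant_lt_two_thirds
  have h_log := log_le_harmonic_floor w.re hw₀.le
  have h_floor := harmonic_floor_sub_one_le_sum_re_digammaTerm hw₀
  rw [digamma_eq_digammaSeries hw₀, digammaSeries, add_re, sub_re, neg_re, ofReal_re,
    re_tsum hsum]
  linarith

lemma norm_trigammaSeries_le {w : ℂ} (hw : 1 ≤ w.re) : ‖trigammaSeries w‖ ≤ 3 := by
  have h_first : ‖(w⁻¹) ^ 2‖ ≤ 1 := by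
    rw [norm_pow, norm_inv]
    exact pow_le_one₀ (by positivity) (inv_le_one_of_one_le₀ (hw.trans (re_le_norm w)))
  have h_tail : ‖∑' n, trigammaTerm n w‖ ≤ 2 :=
    calc ‖∑' n, trigammaTerm n w‖ ≤ π ^ 2 / 6 :=
          tsum_of_norm_bounded hasSum_inv_natCast_add_one_sq
            fun n => norm_trigammaTerm_le (by linarith)
      _ ≤ 2 := by nlinarith [Real.pi_lt_d2, Real.pi_pos]
  calc ‖trigammaSeries w‖ ≤ ‖(w⁻¹) ^ 2‖ + ‖∑' n, trigammaTerm n w‖ := norm_add_le _ _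
    _ ≤ 3 := by linarith

lemma sinh_im_le_norm_sin (z : ℂ) : Real.sinh z.im ≤ ‖sin z‖ := by
  have h := norm_sub_norm_le (exp (-z * I)) (exp (z * I))
  rw [norm_exp, norm_exp] at h
  rw [sin, norm_div, norm_mul, norm_I, mul_one, Complex.norm_two, Real.sinh_eq]
  simp only [neg_mul, neg_re, mul_re, I_re, mul_zero, I_im, mul_one, zero_sub, neg_neg] at h ⊢
  linarith

lemma norm_cos_le_cosh_im (z : ℂ) : ‖cos z‖ ≤ Real.cosh z.im := by
  have h := norm_add_le (exp (z * I)) (exp (-z * I))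
  rw [norm_exp, norm_exp] at h
  rw [cos, norm_div, Complex.norm_two, Real.cosh_eq]
  simp only [neg_mul, neg_re, mul_re, I_re, mul_zero, I_im, mul_one, zero_sub, neg_neg] at h ⊢
  linarith

lemma three_le_norm_sin {z : ℂ} (hz : 3 ≤ z.im) : 3 ≤ ‖sin z‖ :=
  hz.trans ((Real.self_le_sinh_iff.mpr (by linarith)).trans (sinh_im_le_norm_sin z))

lemma norm_cot_le {z : ℂ} (hz : 3 ≤ z.im) : ‖cot z‖ ≤ 4 / 3 := by
  have h_sinh := sinh_im_le_norm_sin z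
  have h_cosh := norm_cos_le_cosh_im z
  -- `3 cosh y ≤ 4 sinh y` amounts to `7 ≤ exp (2 y)`
  have h_exp : 7 * Real.exp (-z.im) ≤ Real.exp z.im := by
    have h7 : 7 ≤ Real.exp (z.im - -z.im) := by linarith [Real.add_one_le_exp (z.im - -z.im)]
    rw [Real.exp_sub] at h7
    rwa [le_div_iff₀ (Real.exp_pos _)] at h7
  have h_sinh_pos : 0 < Real.sinh z.im := Real.sinh_pos_iff.mpr (by linarith)
  rw [cot_eq_cos_div_sin, norm_div, div_le_iff₀ (h_sinh_pos.trans_le h_sinh)]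
  rw [Real.sinh_eq, Real.cosh_eq] at *
  linarith

end Complex

lemma iteratedDeriv_two_div_deriv_eq {𝕜 : Type*} [NontriviallyNormedField 𝕜] {f L : 𝕜 → 𝕜}
    {s : 𝕜} (hf : ∀ᶠ z in 𝓝 s, HasDerivAt f (L z * f z) z) (hL : DifferentiableAt 𝕜 L s)
    (hfs : f s ≠ 0) (hLs : L s ≠ 0) :
    iteratedDeriv 2 f s / deriv f s = L s + deriv L s / L s := by
  have h_deriv : deriv f =ᶠ[𝓝 s] fun z => L z * f z := hf.mono fun z hz => hz.deriv
  rw [iteratedDeriv_succ, iteratedDeriv_one, h_deriv.deriv_eq, h_deriv.eq_of_nhds,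
    deriv_fun_mul hL hf.self_of_nhds.differentiableAt, hf.self_of_nhds.deriv]
  field_simp
  ring

noncomputable def logDerivF (s : ℂ) : ℂ :=
  Complex.log 2 + Complex.log π + π / 2 * Complex.cot (π * s / 2) - digamma (1 - s)

lemma hasDerivAt_pi_mul_div_two (s : ℂ) : HasDerivAt (fun z : ℂ => π * z / 2) (π / 2) s := by
  simpa using ((hasDerivAt_id s).const_mul (π : ℂ)).div_const 2

lemma hasDerivAt_sin_pi_mul_div_two (s : ℂ) :
    HasDerivAt (fun z : ℂ => Complex.sin (π * z / 2)) (Complex.cos (π * s / 2) * (π / 2)) s :=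
  (Complex.hasDerivAt_sin _).comp s (hasDerivAt_pi_mul_div_two s)

lemma hasDerivAt_F {s : ℂ} (hs : s.re < 1) (hsin : Complex.sin (π * s / 2) ≠ 0) :
    HasDerivAt F (logDerivF s * F s) s := by
  have h_re : 0 < (1 - s).re := by simp [hs]
  have h₂ := (hasStrictDerivAt_const_cpow (x := 2) (y := s) (Or.inl two_ne_zero)).hasDerivAt
  have hπ := (hasStrictDerivAt_const_cpow (x := π) (y := s - 1)
    (Or.inl (ofReal_ne_zero.mpr pi_ne_zero))).hasDerivAt.comp s ((hasDerivAt_id s).sub_const 1)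
  have hΓ := (hasDerivAt_Gamma_of_re_pos h_re).comp s ((hasDerivAt_id s).const_sub 1)
  rw [← digamma_eq_digammaSeries h_re] at hΓ
  refine (((h₂.mul hπ).mul (hasDerivAt_sin_pi_mul_div_two s)).mul hΓ).congr_deriv ?_
  simp only [logDerivF, F, Complex.cot_eq_cos_div_sin, Pi.mul_apply, Function.comp_apply, id]
  generalize Complex.sin (π * s / 2) = S at hsin ⊢
  field_simp
  ring

lemma hasDerivAt_logDerivF {s : ℂ} (hs : s.re < 1) (hsin : Complex.sin (π * s / 2) ≠ 0) :
    HasDerivAt logDerivF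
      (-(π / 2) ^ 2 / Complex.sin (π * s / 2) ^ 2 + trigammaSeries (1 - s)) s := by
  have h_re : 0 < (1 - s).re := by simp [hs]
  have hcos : HasDerivAt (fun z : ℂ => Complex.cos (π * z / 2))
      (-Complex.sin (π * s / 2) * (π / 2)) s :=
    (Complex.hasDerivAt_cos _).comp s (hasDerivAt_pi_mul_div_two s)
  have hcot := (hcos.div (hasDerivAt_sin_pi_mul_div_two s) hsin).const_mul ((π : ℂ) / 2)
  have hψ := (hasDerivAt_digamma h_re).comp s ((hasDerivAt_id s).const_sub 1)
  have hfun : logDerivF = fun z => Complex.log 2 + Complex.log π +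
      π / 2 * (Complex.cos (π * z / 2) / Complex.sin (π * z / 2)) - digamma (1 - z) :=
    funext fun z => by rw [logDerivF, Complex.cot_eq_cos_div_sin]
  rw [hfun]
  refine ((hcot.const_add (Complex.log 2 + Complex.log π)).sub hψ).congr_deriv ?_
  have := Complex.sin_sq_add_cos_sq (π * s / 2)
  field_simp
  linear_combination (-π ^ 2 : ℂ) * this

lemma three_le_im_pi_mul_div_two {s : ℂ} (hs : 2 ≤ s.im) : 3 ≤ ((π : ℂ) * s / 2).im := by
  have : ((π : ℂ) * s / 2).im = π * s.im / 2 := by simp [Complex.mul_im]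
  rw [this]
  nlinarith [pi_gt_three]

lemma sin_pi_mul_div_two_ne_zero {s : ℂ} (hs : 2 ≤ s.im) : Complex.sin (π * s / 2) ≠ 0 :=
  norm_pos_iff.mp (by linarith [three_le_norm_sin (three_le_im_pi_mul_div_two hs)])

lemma eventually_hasDerivAt_F {s : ℂ} (hs : s.re < 1) (hsin : Complex.sin (π * s / 2) ≠ 0) :
    ∀ᶠ z in 𝓝 s, HasDerivAt F (logDerivF z * F z) z := by
  filter_upwards [continuous_re.continuousAt.eventually_lt continuousAt_const hs,
    (by fun_prop : Continuous fun z : ℂ => Complex.sin (π * z / 2)).continuousAt.eventually_ne hsin]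
    with z hz hsin_z using hasDerivAt_F hz hsin_z

lemma F_ne_zero {s : ℂ} (hs : s.re < 1) (hsin : Complex.sin (π * s / 2) ≠ 0) : F s ≠ 0 := by
  have h₂ : (2 : ℂ) ^ s ≠ 0 := cpow_ne_zero_iff.mpr (Or.inl two_ne_zero)
  have hπ : (π : ℂ) ^ (s - 1) ≠ 0 :=
    cpow_ne_zero_iff.mpr (Or.inl (ofReal_ne_zero.mpr pi_ne_zero))
  exact mul_ne_zero (mul_ne_zero (mul_ne_zero h₂ hπ) hsin)
    (Complex.Gamma_ne_zero_of_re_pos (by simp [hs]))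

lemma re_logDerivF_le {s : ℂ} (hs : s.re ≤ 0) (him : 2 ≤ s.im) :
    (logDerivF s).re ≤ 8 - Real.log (1 - s.re) := by
  have hlog₂ : (Complex.log 2).re < 0.6931471808 := by
    rw [log_re, Complex.norm_two]; exact Real.log_two_lt_d9
  have hlogπ : (Complex.log π).re ≤ π - 1 := by
    rw [log_ofReal_re]; exact Real.log_le_sub_one_of_pos pi_pos
  have hcot : ((π : ℂ) / 2 * Complex.cot (π * s / 2)).re ≤ π / 2 * (4 / 3) :=
    calc ((π : ℂ) / 2 * Complex.cot (π * s / 2)).re ≤ ‖(π : ℂ) / 2 * Complex.cot (π * s / 2)‖ :=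
          re_le_norm _
      _ ≤ π / 2 * (4 / 3) := by
          rw [norm_mul, norm_div, norm_real, Real.norm_of_nonneg pi_pos.le, Complex.norm_two]
          gcongr
          exact norm_cot_le (three_le_im_pi_mul_div_two him)
  have hψ := log_re_sub_three_le_re_digamma (w := 1 - s) (by simp; linarith)
  rw [sub_re, one_re] at hψ
  simp only [logDerivF, sub_re, add_re]
  linarith [pi_lt_d2]

lemma norm_deriv_logDerivF_le {s : ℂ} (hs : s.re ≤ 0) (him : 2 ≤ s.im) :
    ‖deriv logDerivF s‖ ≤ 4 := by
  have hsin := three_le_norm_sin (three_le_im_pi_mul_div_two him)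
  have hψ₁ := norm_trigammaSeries_le (w := 1 - s) (by simp; linarith)
  have hfirst : ‖-((π : ℂ) / 2) ^ 2 / Complex.sin (π * s / 2) ^ 2‖ ≤ 1 := by
    rw [norm_div, norm_neg, norm_pow, norm_pow, norm_div, norm_real, Real.norm_of_nonneg pi_pos.le,
      Complex.norm_two, div_le_one (by positivity)]
    nlinarith [pi_lt_d2, pi_pos]
  rw [(hasDerivAt_logDerivF (by linarith) (sin_pi_mul_div_two_ne_zero him)).deriv]
  exact (norm_add_le _ _).trans (by linarith)

/-- There exists `σ₂ ≤ -1` such that for all `s = σ + it` with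
`σ ≤ σ₂` and `t ≥ 2`, `|F''(s)/F'(s)| ≥ (1/2) log (1 - σ)`. -/
theorem statement17 :
    ∃ σ₂ : ℝ, σ₂ ≤ -1 ∧ ∀ s : ℂ, s.re ≤ σ₂ → 2 ≤ s.im →
      1 / 2 * Real.log (1 - s.re) ≤ ‖iteratedDeriv 2 F s / deriv F s‖ := by
  refine ⟨-Real.exp 20, by linarith [Real.add_one_le_exp 20], fun s hre him => ?_⟩
  have hs : s.re ≤ 0 := hre.trans (by linarith [Real.exp_pos 20])
  have hlog : 20 ≤ Real.log (1 - s.re) := by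
    rw [Real.le_log_iff_exp_le (by linarith)]
    linarith
  have hsin := sin_pi_mul_div_two_ne_zero him
  have hL : Real.log (1 - s.re) - 8 ≤ ‖logDerivF s‖ := by
    linarith [re_logDerivF_le hs him, (neg_le_abs (logDerivF s).re).trans (abs_re_le_norm _)]
  have hL_ne : logDerivF s ≠ 0 := norm_pos_iff.mp (by linarith)
  have hquot : ‖deriv logDerivF s / logDerivF s‖ ≤ 1 := by
    rw [norm_div, div_le_one (by linarith)]
    linarith [norm_deriv_logDerivF_le hs him]
  rw [iteratedDeriv_two_div_deriv_eq (eventually_hasDerivAt_F (by linarith) hsin)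
    (hasDerivAt_logDerivF (by linarith) hsin).differentiableAt (F_ne_zero (by linarith) hsin) hL_ne]
  linarith [norm_le_add_norm_add (logDerivF s) (deriv logDerivF s / logDerivF s)]
end
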